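/- For every k ≥ 3, the partition characteristic 𝐩𝐚𝐫_k for colorings of k-element subsets equals min{𝔟, 𝔰}, and the homogeneity characteristic 𝐡𝐨𝐦_k equals max{𝔯_σ, 𝔡}. -/

import Mathlib

open Cardinal Set Filter

/-- `H` is homogeneous for the 2-coloring `c` of `k`-element subsets. -/
def HomogK (k : ℕ) (c : Finset ℕ → Bool) (H : Set ℕ) : Prop :=
  ∃ i : Bool, ∀ F : Finset ℕ, ↑F ⊆ H → F.card = k → c F = i

/-- `H` is almost homogeneous for the 2-coloring `c` of `k`-element subsets. -/
def AlmostHomogK (k : ℕ) (c : Finset ℕ → Bool) (H : Set ℕ) : Prop :=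
  ∃ F : Set ℕ, F.Finite ∧ F ⊆ H ∧ HomogK k c (H \ F)

/-- The partition characteristic 𝐩𝐚𝐫_k. -/
noncomputable def parNumK (k : ℕ) : Cardinal :=
  sInf {κ : Cardinal | ∃ P : Set (Finset ℕ → Bool),
    (¬ ∃ H : Set ℕ, H.Infinite ∧ ∀ c ∈ P, AlmostHomogK k c H) ∧ κ = #P}

/-- The homogeneity characteristic 𝐡𝐨𝐦_k. -/
noncomputable def homNumK (k : ℕ) : Cardinal :=
  sInf {κ : Cardinal | ∃ ℋ : Set (Set ℕ), (∀ H ∈ ℋ, H.Infinite) ∧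
    (∀ c : Finset ℕ → Bool, ∃ H ∈ ℋ, AlmostHomogK k c H) ∧ κ = #ℋ}

/-- `g` eventually majorizes `f`. -/
def EvMaj (g f : ℕ → ℕ) : Prop := ∀ᶠ n in Filter.atTop, f n < g n

/-- The bounding number 𝔟. -/
noncomputable def boundNum : Cardinal :=
  sInf {c : Cardinal | ∃ B : Set (ℕ → ℕ),
    (∀ g : ℕ → ℕ, ∃ f ∈ B, ¬ EvMaj g f) ∧ c = #B}

/-- The dominating number 𝔡. -/
noncomputable def domNum : Cardinal :=
  sInf {c : Cardinal | ∃ D : Set (ℕ → ℕ),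
    (∀ f : ℕ → ℕ, ∃ g ∈ D, EvMaj g f) ∧ c = #D}

/-- `X` splits `Y`: both `X ∩ Y` and `Y \ X` are infinite. -/
def Splits (X Y : Set ℕ) : Prop := (X ∩ Y).Infinite ∧ (Y \ X).Infinite

/-- The splitting number 𝔰. -/
noncomputable def splitNum : Cardinal :=
  sInf {c : Cardinal | ∃ S : Set (Set ℕ),
    (∀ Y : Set ℕ, Y.Infinite → ∃ X ∈ S, Splits X Y) ∧ c = #S}

/-- The σ-unsplitting number 𝔯_σ. -/
noncomputable def unsplitSigmaNum : Cardinal :=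
  sInf {c : Cardinal | ∃ 𝒳 : Set (Set ℕ), (∀ X ∈ 𝒳, X.Infinite) ∧
    (∀ Y : ℕ → Set ℕ, ∃ X ∈ 𝒳, ∀ n : ℕ, ¬ Splits (Y n) X) ∧ c = #𝒳}

/-! ### Basic infrastructure -/

lemma notSplits_left {Y X : Set ℕ} (h : (X ∩ Y).Finite) : ¬ Splits Y X := by
  rintro ⟨h1, _⟩
  exact h1 (by rwa [Set.inter_comm])

lemma notSplits_right {Y X : Set ℕ} (h : (X \ Y).Finite) : ¬ Splits Y X :=
  fun hs => hs.2 h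

/-- enumeration of an infinite set -/
noncomputable def en (X : Set ℕ) : ℕ → ℕ := Nat.nth (· ∈ X)

lemma en_mem {X : Set ℕ} (hX : X.Infinite) (n : ℕ) : en X n ∈ X :=
  Nat.nth_mem_of_infinite hX n

lemma en_strictMono {X : Set ℕ} (hX : X.Infinite) : StrictMono (en X) :=
  Nat.nth_strictMono hX

lemma en_le {X : Set ℕ} (hX : X.Infinite) (n : ℕ) : n ≤ en X n :=
  (en_strictMono hX).le_apply

lemma en_injective {X : Set ℕ} (hX : X.Infinite) : Function.Injective (en X) :=
  (en_strictMono hX).injective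

/-- the diagonal argument: a countable family does not split. -/
lemma unsplit_diag (X0 : Set ℕ) (hX0 : X0.Infinite) (Y : ℕ → Set ℕ) :
    ∃ X, X ⊆ X0 ∧ X.Infinite ∧ ∀ n, ¬ Splits (Y n) X := by
  classical
  -- chain
  let C : ℕ → Set ℕ := fun n => Nat.rec X0
    (fun m Cm => if (Cm ∩ Y m).Infinite then Cm ∩ Y m else Cm \ Y m) n
  have hCsucc : ∀ n, C (n+1) = if (C n ∩ Y n).Infinite then C n ∩ Y n else C n \ Y n :=
    fun n => rfl
  have hCinf : ∀ n, (C n).Infinite := by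
    intro n
    induction n with
    | zero => exact hX0
    | succ m ih =>
      rw [hCsucc m]
      by_cases h : (C m ∩ Y m).Infinite
      · simpa [h]
      · simp only [h, if_false]
        intro hfin
        exact ih <| by
          have : C m ⊆ (C m ∩ Y m) ∪ (C m \ Y m) := by
            intro x hx
            by_cases hxy : x ∈ Y m
            · exact Or.inl ⟨hx, hxy⟩
            · exact Or.inr ⟨hx, hxy⟩
          exact Set.Finite.subset ((Set.not_infinite.mp h).union hfin) this
  have hCsub : ∀ n, C (n+1) ⊆ C n := by
    intro n
    rw [hCsucc n]
    by_cases h : (C n ∩ Y n).Infinite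
    · simp [h, Set.inter_subset_left]
    · simp only [h, if_false]; exact Set.diff_subset
  have hCmono : ∀ m n, m ≤ n → C n ⊆ C m := by
    intro m n hmn
    induction n with
    | zero => simpa [Nat.le_zero.mp hmn]
    | succ l ih =>
      rcases Nat.lt_or_ge m (l+1) with h | h
      · exact (hCsub l).trans (ih (Nat.lt_succ_iff.mp h))
      · have : m = l + 1 := le_antisymm hmn h
        simp [this]
  -- diagonal sequence
  let x : ℕ → ℕ := fun n => Nat.rec (en (C 1) 0)
    (fun m xm => en (C (m+2)) (xm + 1)) n
  have hx0 : x 0 = en (C 1) 0 := rfl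
  have hxsucc : ∀ n, x (n+1) = en (C (n+2)) (x n + 1) := fun n => rfl
  have hxmem : ∀ n, x n ∈ C (n+1) := by
    intro n
    cases n with
    | zero => exact en_mem (hCinf 1) 0
    | succ m => exact en_mem (hCinf (m+2)) _
  have hxlt : ∀ n, x n < x (n+1) := by
    intro n
    rw [hxsucc n]
    exact lt_of_lt_of_le (Nat.lt_succ_self _) (en_le (hCinf (n+2)) _)
  have hxsm : StrictMono x := strictMono_nat_of_lt_succ hxlt
  refine ⟨Set.range x, ?_, Set.infinite_range_of_injective hxsm.injective, ?_⟩
  · rintro _ ⟨n, rfl⟩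
    exact hCmono 0 (n+1) (Nat.zero_le _) (hxmem n)
  · intro n
    -- range x \ C (n+1) is finite
    have htail : ∀ m, n ≤ m → x m ∈ C (n+1) := by
      intro m hm
      exact hCmono (n+1) (m+1) (Nat.succ_le_succ hm) (hxmem m)
    have hfin : (Set.range x \ C (n+1)).Finite := by
      apply Set.Finite.subset (Set.finite_Iio (x n))
      rintro _ ⟨⟨m, rfl⟩, hnot⟩
      by_contra hlt
      simp only [Set.mem_Iio, not_lt] at hlt
      have : n ≤ m := hxsm.le_iff_le.mp hlt
      exact hnot (htail m this)
    by_cases h : (C n ∩ Y n).Infinite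
    · apply notSplits_right
      have : Set.range x \ Y n ⊆ Set.range x \ C (n+1) := by
        intro z hz
        refine ⟨hz.1, fun hc => hz.2 ?_⟩
        rw [hCsucc n] at hc
        simp only [h, if_true] at hc
        exact hc.2
      exact hfin.subset this
    · apply notSplits_left
      have : Set.range x ∩ Y n ⊆ Set.range x \ C (n+1) := by
        intro z hz
        refine ⟨hz.1, fun hc => ?_⟩
        rw [hCsucc n] at hc
        simp only [h, if_false] at hc
        exact hc.2 hz.2
      exact hfin.subset this

/-! ### splitting / bounding number facts -/

/-- the set of even-indexed elements splits an infinite set -/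
lemma exists_splits (Y : Set ℕ) (hY : Y.Infinite) : ∃ X : Set ℕ, Splits X Y := by
  refine ⟨en Y '' {n | Even n}, ?_, ?_⟩
  · have : en Y '' {n | Even n} ⊆ Y := by
      rintro _ ⟨n, _, rfl⟩; exact en_mem hY n
    rw [Set.inter_eq_self_of_subset_left this]
    exact Set.infinite_of_injective_forall_mem
      (f := fun n : ℕ => en Y (2 * n))
      (fun a b hab => by
        have := en_injective hY hab
        omega)
      (fun n => ⟨2 * n, ⟨n, by ring⟩, rfl⟩)
  · exact Set.infinite_of_injective_forall_mem
      (f := fun n : ℕ => en Y (2 * n + 1))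
      (fun a b hab => by
        have := en_injective hY hab
        omega)
      (fun n => ⟨en_mem hY _, by
        rintro ⟨m, hm, heq⟩
        have := en_injective hY heq
        exact (Nat.not_odd_iff_even.mpr hm) ⟨n, by omega⟩⟩)

lemma splitNum_nonempty : {c : Cardinal | ∃ S : Set (Set ℕ),
    (∀ Y : Set ℕ, Y.Infinite → ∃ X ∈ S, Splits X Y) ∧ c = #S}.Nonempty := by
  refine ⟨#(Set.univ : Set (Set ℕ)), Set.univ, fun Y hY => ?_, rfl⟩
  obtain ⟨X, hX⟩ := exists_splits Y hY
  exact ⟨X, Set.mem_univ X, hX⟩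

lemma aleph0_lt_splitNum : ℵ₀ < splitNum := by
  have hmem := csInf_mem splitNum_nonempty
  obtain ⟨S, hS, hEq⟩ := hmem
  rw [splitNum, hEq]
  rcases lt_or_ge ℵ₀ (#S) with h | h
  · exact h
  · exfalso
    have hcnt : Countable ↥S := Cardinal.mk_le_aleph0_iff.mp h
    have hne : Nonempty ↥S := by
      obtain ⟨X, hX, _⟩ := hS Set.univ Set.infinite_univ
      exact ⟨⟨X, hX⟩⟩
    obtain ⟨f, hf⟩ := exists_surjective_nat ↥S
    obtain ⟨X, _, hXinf, hXuns⟩ := unsplit_diag Set.univ Set.infinite_univ (fun n => (f n : Set ℕ))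
    obtain ⟨Z, hZS, hZ⟩ := hS X hXinf
    obtain ⟨n, hn⟩ := hf ⟨Z, hZS⟩
    exact hXuns n (by rw [hn] ; exact hZ)

/-- families of size < 𝔰 do not split, relativized to X0 -/
lemma exists_unsplit_of_card_lt (X0 : Set ℕ) (hX0 : X0.Infinite) (W : Set (Set ℕ))
    (hW : #W < splitNum) : ∃ X, X ⊆ X0 ∧ X.Infinite ∧ ∀ Y ∈ W, ¬ Splits Y X := by
  classical
  set e := en X0 with he
  -- pull back
  set W' : Set (Set ℕ) := (fun Y => e ⁻¹' Y) '' W with hW'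
  have hW'card : #W' < splitNum := lt_of_le_of_lt (Cardinal.mk_image_le) hW
  -- unrelativized
  have hZ : ∃ Z : Set ℕ, Z.Infinite ∧ ∀ Y' ∈ W', ¬ Splits Y' Z := by
    by_contra hcon
    push_neg at hcon
    have : splitNum ≤ #W' := csInf_le' ⟨W', by
      refine ⟨fun Z hZinf => ?_, rfl⟩
      obtain ⟨Y', hY', hs⟩ := hcon Z hZinf
      exact ⟨Y', hY', hs⟩⟩
    exact absurd hW'card (not_lt.mpr this)
  obtain ⟨Z, hZinf, hZuns⟩ := hZ
  refine ⟨e '' Z, ?_, Set.Infinite.image (Set.injOn_of_injective (en_injective hX0)) hZinf, ?_⟩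
  · rintro _ ⟨z, _, rfl⟩; exact en_mem hX0 z
  · intro Y hY
    have huns := hZuns (e ⁻¹' Y) ⟨Y, hY, rfl⟩
    intro hs
    apply huns
    constructor
    · -- (e⁻¹' Y ∩ Z) infinite from (Y ∩ e''Z) infinite
      have him : Y ∩ e '' Z ⊆ e '' (e ⁻¹' Y ∩ Z) := by
        rintro y ⟨hy, z, hz, rfl⟩
        exact ⟨z, ⟨hy, hz⟩, rfl⟩
      intro hfin
      exact hs.1 (Set.Finite.subset (hfin.image e) him)
    · have him : e '' Z \ Y ⊆ e '' (Z \ e ⁻¹' Y) := by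
        rintro y ⟨⟨z, hz, rfl⟩, hy⟩
        exact ⟨z, ⟨hz, hy⟩, rfl⟩
      intro hfin
      exact hs.2 (Set.Finite.subset (hfin.image e) him)

/-- families of size < 𝔟 are eventually majorized by a single strictly monotone function -/
lemma exists_evmaj_of_card_lt (B : Set (ℕ → ℕ)) (hB : #B < boundNum) :
    ∃ g : ℕ → ℕ, StrictMono g ∧ (∀ n, n < g n) ∧ ∀ f ∈ B, EvMaj g f := by
  have : ∃ g0 : ℕ → ℕ, ∀ f ∈ B, EvMaj g0 f := by
    by_contra hcon
    push_neg at hcon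
    have : boundNum ≤ #B := csInf_le' ⟨B, by
      refine ⟨fun g => ?_, rfl⟩
      obtain ⟨f, hf, hnm⟩ := hcon g
      exact ⟨f, hf, hnm⟩⟩
    exact absurd hB (not_lt.mpr this)
  obtain ⟨g0, hg0⟩ := this
  refine ⟨fun n => n + 1 + (Finset.range (n+1)).sup g0, ?_, ?_, ?_⟩
  · apply strictMono_nat_of_lt_succ
    intro n
    have : (Finset.range (n+1)).sup g0 ≤ (Finset.range (n+1+1)).sup g0 :=
      Finset.sup_mono (Finset.range_subset_range.mpr (by omega))
    omega
  · intro n; show n < n + 1 + (Finset.range (n+1)).sup g0; omega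
  · intro f hf
    filter_upwards [hg0 f hf] with n hn
    have : g0 n ≤ (Finset.range (n+1)).sup g0 :=
      Finset.le_sup (Finset.self_mem_range_succ n)
    omega

/-! ### sparse subsets -/

/-- a `g`-sparse subset of `X` -/
noncomputable def sparse (X : Set ℕ) (g : ℕ → ℕ) : ℕ → ℕ :=
  fun n => Nat.rec (en X 0) (fun _ um => en X (g um + 1)) n

lemma sparse_mem {X : Set ℕ} (hX : X.Infinite) (g : ℕ → ℕ) (n : ℕ) :
    sparse X g n ∈ X := by
  cases n with
  | zero => exact en_mem hX 0
  | succ m => exact en_mem hX _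

lemma sparse_strictMono {X : Set ℕ} (hX : X.Infinite) {g : ℕ → ℕ} (hg : ∀ n, n < g n) :
    StrictMono (sparse X g) := by
  apply strictMono_nat_of_lt_succ
  intro n
  have h1 : g (sparse X g n) + 1 ≤ en X (g (sparse X g n) + 1) := en_le hX _
  have h2 : sparse X g n < g (sparse X g n) := hg _
  show sparse X g n < en X (g (sparse X g n) + 1)
  omega

/-- key property: between two points of the sparse set, `g` is dominated -/
lemma sparse_key {X : Set ℕ} (hX : X.Infinite) {g : ℕ → ℕ} (hg : ∀ n, n < g n)
    {a b : ℕ} (ha : a ∈ Set.range (sparse X g))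
    (hb : b ∈ Set.range (sparse X g)) (hab : a < b) : g a < b := by
  obtain ⟨i, rfl⟩ := ha
  obtain ⟨j, rfl⟩ := hb
  have hij : i < j := (sparse_strictMono hX hg).lt_iff_lt.mp hab
  have h1 : sparse X g (i+1) ≤ sparse X g j := (sparse_strictMono hX hg).monotone hij
  have h2 : g (sparse X g i) + 1 ≤ sparse X g (i+1) := en_le hX _
  omega

lemma sparse_range_subset {X : Set ℕ} (hX : X.Infinite) (g : ℕ → ℕ) :
    Set.range (sparse X g) ⊆ X := by
  rintro _ ⟨n, rfl⟩; exact sparse_mem hX g n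

lemma sparse_range_infinite {X : Set ℕ} (hX : X.Infinite) {g : ℕ → ℕ} (hg : ∀ n, n < g n) :
    (Set.range (sparse X g)).Infinite :=
  Set.infinite_range_of_injective (sparse_strictMono hX hg).injective

/-! ### Main Lemma A: families of size < min(𝔟,𝔰) have a common almost homogeneous set -/

lemma lemmaA : ∀ j : ℕ, ∀ X0 : Set ℕ, X0.Infinite → ∀ P : Set (Finset ℕ → Bool),
    Cardinal.mk P < boundNum → #P < splitNum →
    ∃ H, H ⊆ X0 ∧ H.Infinite ∧ ∀ c ∈ P, AlmostHomogK (j+1) c H := by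
  intro j
  induction j with
  | zero =>
    intro X0 hX0 P hPb hPs
    classical
    set W : Set (Set ℕ) := Set.range (fun c : ↥P => {n | (c : Finset ℕ → Bool) {n} = true})
      with hWdef
    have hWcard : #W < splitNum := lt_of_le_of_lt Cardinal.mk_range_le hPs
    obtain ⟨X, hXsub, hXinf, hXuns⟩ := exists_unsplit_of_card_lt X0 hX0 W hWcard
    refine ⟨X, hXsub, hXinf, ?_⟩
    intro c hc
    set Yc : Set ℕ := {n | c {n} = true} with hYc
    have huns : ¬ Splits Yc X := hXuns Yc ⟨⟨c, hc⟩, rfl⟩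
    rw [Splits, not_and_or, Set.not_infinite, Set.not_infinite] at huns
    rcases huns with hfin | hfin
    · -- X ∩ Yc finite: color false
      refine ⟨X ∩ Yc, by rwa [Set.inter_comm] at hfin, Set.inter_subset_left, false, ?_⟩
      intro F hFsub hFcard
      obtain ⟨n, rfl⟩ := Finset.card_eq_one.mp hFcard
      have hn : n ∈ X \ (X ∩ Yc) := hFsub (by simp)
      have : n ∉ Yc := fun h => hn.2 ⟨hn.1, h⟩
      simpa [hYc] using this
    · -- X \ Yc finite: color true
      refine ⟨X \ Yc, hfin, Set.diff_subset, true, ?_⟩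
      intro F hFsub hFcard
      obtain ⟨n, rfl⟩ := Finset.card_eq_one.mp hFcard
      have hn : n ∈ X \ (X \ Yc) := hFsub (by simp)
      have : n ∈ Yc := by
        by_contra h
        exact hn.2 ⟨hn.1, h⟩
      simpa [hYc] using this
  | succ j IH =>
    intro X0 hX0 P hPb hPs
    classical
    -- sections
    set Ysec : (Finset ℕ → Bool) → Finset ℕ → Set ℕ :=
      fun c s => {m | c (insert m s) = true} with hYsec
    set W : Set (Set ℕ) := Set.range (fun q : ↥P × Finset ℕ => Ysec (q.1 : _) q.2) with hWdef
    have hWcard : #W < splitNum := by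
      refine lt_of_le_of_lt Cardinal.mk_range_le ?_
      have h1 : #(↥P × Finset ℕ) = #P * ℵ₀ := by
        rw [Cardinal.mk_prod, Cardinal.lift_id, Cardinal.lift_id, Cardinal.mk_eq_aleph0 (Finset ℕ)]
      rw [h1]
      exact lt_of_le_of_lt (Cardinal.mul_le_max _ _)
        (max_lt (max_lt hPs aleph0_lt_splitNum) aleph0_lt_splitNum)
    obtain ⟨X, hXsub, hXinf, hXuns⟩ := exists_unsplit_of_card_lt X0 hX0 W hWcard
    -- limit colorings
    set t : (Finset ℕ → Bool) → Finset ℕ → Bool :=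
      fun c s => if (X \ Ysec c s).Finite then true else false with ht
    -- settling
    have hsettle : ∀ c : Finset ℕ → Bool, ∀ s : Finset ℕ, ∃ N : ℕ,
        c ∈ P → ∀ m ∈ X, N ≤ m → c (insert m s) = t c s := by
      intro c s
      by_cases hc : c ∈ P
      · have huns : ¬ Splits (Ysec c s) X := hXuns _ ⟨(⟨c, hc⟩, s), rfl⟩
        rw [Splits, not_and_or, Set.not_infinite, Set.not_infinite] at huns
        by_cases hfin : (X \ Ysec c s).Finite
        · obtain ⟨N, hN⟩ := hfin.bddAbove
          refine ⟨N + 1, fun _ m hm hNm => ?_⟩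
          have hmem : m ∈ Ysec c s := by
            by_contra h
            exact absurd (hN ⟨hm, h⟩) (by omega)
          have : c (insert m s) = true := hmem
          simp [ht, hfin, this]
        · have hfin2 : (X ∩ Ysec c s).Finite := by
            rcases huns with h | h
            · rwa [Set.inter_comm] at h
            · exact absurd h hfin
          obtain ⟨N, hN⟩ := hfin2.bddAbove
          refine ⟨N + 1, fun _ m hm hNm => ?_⟩
          have hmem : m ∉ Ysec c s := by
            intro h
            exact absurd (hN ⟨hm, h⟩) (by omega)
          have : c (insert m s) = false := by
            have : ¬ (c (insert m s) = true) := hmem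
            simpa using this
          simp [ht, hfin, this]
      · exact ⟨0, fun h => absurd h hc⟩
    choose Nfun hNfun using hsettle
    -- settle bound for all subsets of an initial segment
    set fC : (Finset ℕ → Bool) → ℕ → ℕ :=
      fun c n => ((Finset.range (n+1)).powerset).sup (Nfun c) with hfC
    have hfCprop : ∀ c ∈ P, ∀ n : ℕ, ∀ s ⊆ Finset.range (n+1), ∀ m ∈ X,
        fC c n ≤ m → c (insert m s) = t c s := by
      intro c hc n s hs m hm hle
      refine hNfun c s hc m hm ?_
      exact le_trans (Finset.le_sup (Finset.mem_powerset.mpr hs)) hle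
    -- bounding
    set B : Set (ℕ → ℕ) := Set.range (fun c : ↥P => fC (c : _)) with hB
    have hBcard : #B < boundNum := lt_of_le_of_lt Cardinal.mk_range_le hPb
    obtain ⟨g, hgsm, hgid, hgmaj⟩ := exists_evmaj_of_card_lt B hBcard
    -- sparse subset
    set X1 : Set ℕ := Set.range (sparse X g) with hX1
    have hX1inf : X1.Infinite := sparse_range_infinite hXinf hgid
    have hX1sub : X1 ⊆ X := sparse_range_subset hXinf g
    -- limit colorings family
    set P' : Set (Finset ℕ → Bool) := Set.range (fun c : ↥P => t (c : _)) with hP'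
    have hP'b : #P' < boundNum := lt_of_le_of_lt Cardinal.mk_range_le hPb
    have hP's : #P' < splitNum := lt_of_le_of_lt Cardinal.mk_range_le hPs
    obtain ⟨H, hHsub, hHinf, hHhom⟩ := IH X1 hX1inf P' hP'b hP's
    refine ⟨H, hHsub.trans (hX1sub.trans hXsub), hHinf, ?_⟩
    intro c hc
    obtain ⟨F0, hF0fin, hF0sub, i, hhom⟩ := hHhom (t c) ⟨⟨c, hc⟩, rfl⟩
    obtain ⟨N1, hN1⟩ := Filter.eventually_atTop.mp (hgmaj (fC c) ⟨⟨c, hc⟩, rfl⟩)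
    refine ⟨F0 ∪ {x ∈ H | x ≤ N1}, ?_, ?_, i, ?_⟩
    · exact hF0fin.union ((Set.finite_Iic N1).subset (fun x hx => hx.2))
    · exact Set.union_subset hF0sub (fun x hx => hx.1)
    · intro G hGsub hGcard
      have hGne : G.Nonempty := Finset.card_pos.mp (by omega)
      set b := G.max' hGne with hb
      set s := G.erase b with hsdef
      have hbG : b ∈ G := G.max'_mem hGne
      have hins : insert b s = G := Finset.insert_erase hbG
      have hscard : s.card = j + 1 := by
        rw [hsdef, Finset.card_erase_of_mem hbG, hGcard]
        omega
      have hsne : s.Nonempty := Finset.card_pos.mp (by omega)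
      set a := s.max' hsne with ha
      have haS : a ∈ s := s.max'_mem hsne
      have haG : a ∈ G := Finset.erase_subset _ _ haS
      have hab : a < b := by
        have h1 : a ≤ b := Finset.le_max' G a haG
        have h2 : a ≠ b := (Finset.mem_erase.mp haS).1
        omega
      have hsrange : s ⊆ Finset.range (a + 1) := by
        intro x hx
        rw [Finset.mem_range]
        exact Nat.lt_succ_of_le (Finset.le_max' s x hx)
      have haHF : a ∈ H \ (F0 ∪ {x ∈ H | x ≤ N1}) := hGsub haG
      have hbHF : b ∈ H \ (F0 ∪ {x ∈ H | x ≤ N1}) := hGsub hbG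
      have haN1 : N1 < a := by
        by_contra hcon
        exact haHF.2 (Or.inr ⟨haHF.1, by omega⟩)
      have haX1 : a ∈ X1 := hHsub haHF.1
      have hbX1 : b ∈ X1 := hHsub hbHF.1
      have hgab : g a < b := sparse_key hXinf hgid haX1 hbX1 hab
      have hfCa : fC c a < g a := hN1 a (by omega)
      have hcG : c G = t c s := by
        rw [← hins]
        exact hfCprop c hc a s hsrange b (hX1sub hbX1) (by omega)
      have hts : t c s = i := by
        apply hhom s ?_ hscard
        intro x hx
        have hxG : x ∈ G := (Finset.erase_subset _ _) hx
        have := hGsub hxG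
        exact ⟨this.1, fun hxF0 => this.2 (Or.inl hxF0)⟩
      rw [hcG, hts]

/-! ### colorings from functions -/

/-- monotone envelope -/
def mEnv (f : ℕ → ℕ) : ℕ → ℕ := fun n => (Finset.range (n+1)).sup f

lemma mEnv_mono (f : ℕ → ℕ) : Monotone (mEnv f) := by
  intro a b hab
  exact Finset.sup_mono (Finset.range_subset_range.mpr (by omega))

lemma le_mEnv (f : ℕ → ℕ) (n : ℕ) : f n ≤ mEnv f n :=
  Finset.le_sup (Finset.self_mem_range_succ n)

/-- the coloring associated to a function -/
def colF (f : ℕ → ℕ) : Finset ℕ → Bool := fun F =>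
  if h : F.Nonempty then decide (mEnv f (F.min' h) < F.max' h) else true

lemma colF_evmaj {k : ℕ} (hk : 2 ≤ k) (f : ℕ → ℕ) (H : Set ℕ) (hH : H.Infinite)
    (hA : AlmostHomogK k (colF f) H) : EvMaj (fun n => en H (n + k) + 1) f := by
  obtain ⟨F0, hfin, hsub, i, hhom⟩ := hA
  set H' : Set ℕ := H \ F0 with hH'
  have hH'inf : H'.Infinite := hH.diff hfin
  -- the color must be true
  have hi : i = true := by
    by_contra hfalse
    have hi' : i = false := by simpa using hfalse
    subst hi'
    set m0 := en H' 0 with hm0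
    set n0 := mEnv f m0 + 1 with hn0
    set F : Finset ℕ := Finset.image (en H') (insert (k - 1 + n0) (Finset.range (k-1)))
      with hF
    have hFsub : ↑F ⊆ H' := by
      intro x hx
      simp only [hF, Finset.coe_image, Set.mem_image] at hx
      obtain ⟨idx, _, rfl⟩ := hx
      exact en_mem hH'inf idx
    have hFcard : F.card = k := by
      rw [hF, Finset.card_image_of_injective _ (en_injective hH'inf),
        Finset.card_insert_of_notMem (by simp only [Finset.mem_range]; omega),
        Finset.card_range]
      omega
    have := hhom F hFsub hFcard
    have hFne : F.Nonempty := Finset.card_pos.mp (by omega)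
    rw [colF, dif_pos hFne] at this
    have hcontra : ¬ (mEnv f (F.min' hFne) < F.max' hFne) := by
      simpa using this
    apply hcontra
    have h1 : F.min' hFne ≤ m0 := by
      apply Finset.min'_le
      rw [hF]
      apply Finset.mem_image_of_mem
      simp [Finset.mem_range]
      omega
    have h2 : en H' (k - 1 + n0) ≤ F.max' hFne := by
      apply Finset.le_max'
      rw [hF]
      exact Finset.mem_image_of_mem _ (Finset.mem_insert_self _ _)
    have h3 : k - 1 + n0 ≤ en H' (k - 1 + n0) := en_le hH'inf _
    have h4 : mEnv f (F.min' hFne) ≤ mEnv f m0 := mEnv_mono f h1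
    omega
  subst hi
  -- now extract eventual majorization
  obtain ⟨N0, hN0⟩ := hfin.bddAbove
  rw [EvMaj, Filter.eventually_atTop]
  refine ⟨N0 + 1, fun n hn => ?_⟩
  set F : Finset ℕ := Finset.image (en H) (Finset.Icc n (n + (k-1))) with hF
  have hmemH' : ∀ idx, n ≤ idx → en H idx ∈ H' := by
    intro idx hidx
    refine ⟨en_mem hH idx, fun hmem => ?_⟩
    have h1 := hN0 hmem
    have h2 : idx ≤ en H idx := en_le hH idx
    omega
  have hFsub : ↑F ⊆ H' := by
    intro x hx
    simp only [hF, Finset.coe_image, Set.mem_image] at hx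
    obtain ⟨idx, hidx, rfl⟩ := hx
    rw [Finset.coe_Icc, Set.mem_Icc] at hidx
    exact hmemH' idx hidx.1
  have hFcard : F.card = k := by
    rw [hF, Finset.card_image_of_injective _ (en_injective hH), Nat.card_Icc]
    omega
  have := hhom F hFsub hFcard
  have hFne : F.Nonempty := Finset.card_pos.mp (by omega)
  rw [colF, dif_pos hFne] at this
  have hlt : mEnv f (F.min' hFne) < F.max' hFne := by simpa using this
  have h1 : en H n ≤ F.min' hFne := by
    apply Finset.le_min'
    intro y hy
    simp only [hF, Finset.mem_image] at hy
    obtain ⟨idx, hidx, rfl⟩ := hy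
    rw [Finset.mem_Icc] at hidx
    exact (en_strictMono hH).monotone hidx.1
  have h2 : F.max' hFne ≤ en H (n + (k-1)) := by
    apply Finset.max'_le
    intro y hy
    simp only [hF, Finset.mem_image] at hy
    obtain ⟨idx, hidx, rfl⟩ := hy
    rw [Finset.mem_Icc] at hidx
    exact (en_strictMono hH).monotone hidx.2
  have h3 : mEnv f n ≤ mEnv f (F.min' hFne) := mEnv_mono f ((en_le hH n).trans h1)
  have h4 : f n ≤ mEnv f n := le_mEnv f n
  have h5 : en H (n + (k-1)) < en H (n + k) := (en_strictMono hH) (by omega)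
  omega

lemma boundNum_nonempty : {c : Cardinal | ∃ B : Set (ℕ → ℕ),
    (∀ g : ℕ → ℕ, ∃ f ∈ B, ¬ EvMaj g f) ∧ c = #B}.Nonempty := by
  refine ⟨#(Set.univ : Set (ℕ → ℕ)), Set.univ, fun g => ⟨g, Set.mem_univ g, ?_⟩, rfl⟩
  intro h
  obtain ⟨N, hN⟩ := Filter.eventually_atTop.mp h
  exact lt_irrefl _ (hN N le_rfl)

lemma domNum_nonempty : {c : Cardinal | ∃ D : Set (ℕ → ℕ),
    (∀ f : ℕ → ℕ, ∃ g ∈ D, EvMaj g f) ∧ c = #D}.Nonempty := by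
  refine ⟨#(Set.univ : Set (ℕ → ℕ)), Set.univ, fun f => ⟨fun n => f n + 1, Set.mem_univ _, ?_⟩, rfl⟩
  exact Filter.Eventually.of_forall (fun n => Nat.lt_succ_self _)

/-- witness family for par ≤ 𝔟 -/
lemma exists_par_witness_bound (k : ℕ) (hk : 2 ≤ k) :
    ∃ P : Set (Finset ℕ → Bool),
      (¬ ∃ H : Set ℕ, H.Infinite ∧ ∀ c ∈ P, AlmostHomogK k c H) ∧ #P ≤ boundNum := by
  obtain ⟨B, hBprop, hBeq⟩ := csInf_mem boundNum_nonempty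
  refine ⟨Set.range (fun f : ↥B => colF (f : ℕ → ℕ)), ?_, ?_⟩
  · rintro ⟨H, hHinf, hall⟩
    obtain ⟨f, hfB, hnot⟩ := hBprop (fun n => en H (n + k) + 1)
    exact hnot (colF_evmaj hk f H hHinf (hall (colF f) ⟨⟨f, hfB⟩, rfl⟩))
  · rw [show boundNum = #B from hBeq]
    exact Cardinal.mk_range_le

lemma par_le_bound (k : ℕ) (hk : 2 ≤ k) : parNumK k ≤ boundNum := by
  obtain ⟨P, h1, h2⟩ := exists_par_witness_bound k hk
  exact le_trans (csInf_le' ⟨P, h1, rfl⟩) h2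

open Classical in
/-- coloring by membership of the minimum -/
noncomputable def colS (Z : Set ℕ) : Finset ℕ → Bool := fun F =>
  if h : F.Nonempty then (if F.min' h ∈ Z then true else false) else true

/-- an almost homogeneous set for colS Z is not split by Z -/
lemma colS_unsplit {k : ℕ} (hk : 1 ≤ k) (Z : Set ℕ) (H : Set ℕ) (hH : H.Infinite)
    (hA : AlmostHomogK k (colS Z) H) : ¬ Splits Z H := by
  classical
  obtain ⟨F0, hfin, hsub, i, hhom⟩ := hA
  set H' : Set ℕ := H \ F0 with hH'
  have hH'inf : H'.Infinite := hH.diff hfin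
  have hkey : ∀ m ∈ H', (m ∈ Z ↔ i = true) := by
    intro m hm
    set T : Set ℕ := {x ∈ H' | m < x} with hT
    have hTinf : T.Infinite := by
      refine (hH'inf.diff (Set.finite_Iic m)).mono ?_
      rintro x ⟨hx1, hx2⟩
      exact ⟨hx1, by simpa using hx2⟩
    have hTsub : T ⊆ H' := fun x hx => hx.1
    set F : Finset ℕ := insert m (Finset.image (en T) (Finset.range (k-1))) with hF
    have himgt : ∀ y ∈ Finset.image (en T) (Finset.range (k-1)), m < y := by
      intro y hy
      simp only [Finset.mem_image] at hy
      obtain ⟨idx, _, rfl⟩ := hy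
      exact (en_mem hTinf idx).2
    have hFsub : ↑F ⊆ H' := by
      intro x hx
      simp only [hF, Finset.coe_insert, Set.mem_insert_iff, Finset.coe_image,
        Set.mem_image] at hx
      rcases hx with rfl | ⟨idx, _, rfl⟩
      · exact hm
      · exact hTsub (en_mem hTinf idx)
    have hFcard : F.card = k := by
      rw [hF, Finset.card_insert_of_notMem (fun hc => lt_irrefl m (himgt m hc)),
        Finset.card_image_of_injective _ (en_injective hTinf), Finset.card_range]
      omega
    have hFne : F.Nonempty := ⟨m, Finset.mem_insert_self m _⟩
    have hmin : F.min' hFne = m := by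
      apply le_antisymm
      · exact Finset.min'_le F m (Finset.mem_insert_self m _)
      · apply Finset.le_min'
        intro y hy
        rcases Finset.mem_insert.mp hy with rfl | hy'
        · exact le_rfl
        · exact le_of_lt (himgt y hy')
    have hcol : colS Z F = (if m ∈ Z then true else false) := by
      simp only [colS, dif_pos hFne, hmin]
    have hiz : (if m ∈ Z then true else false) = i := by
      rw [← hcol]; exact hhom F hFsub hFcard
    by_cases hmZ : m ∈ Z
    · rw [if_pos hmZ] at hiz
      simp [hmZ, ← hiz]
    · rw [if_neg hmZ] at hiz
      simp [hmZ, ← hiz]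
  by_cases hi : i = true
  · apply notSplits_right
    have : H \ Z ⊆ F0 := by
      rintro x ⟨hx1, hx2⟩
      by_contra hxF0
      exact hx2 ((hkey x ⟨hx1, hxF0⟩).mpr hi)
    exact hfin.subset this
  · apply notSplits_left
    have : H ∩ Z ⊆ F0 := by
      rintro x ⟨hx1, hx2⟩
      by_contra hxF0
      exact hi ((hkey x ⟨hx1, hxF0⟩).mp hx2)
    exact hfin.subset this

/-- witness family for par ≤ 𝔰 -/
lemma exists_par_witness_split (k : ℕ) (hk : 1 ≤ k) :
    ∃ P : Set (Finset ℕ → Bool),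
      (¬ ∃ H : Set ℕ, H.Infinite ∧ ∀ c ∈ P, AlmostHomogK k c H) ∧ #P ≤ splitNum := by
  obtain ⟨S, hSprop, hSeq⟩ := csInf_mem splitNum_nonempty
  refine ⟨Set.range (fun Z : ↥S => colS (Z : Set ℕ)), ?_, ?_⟩
  · rintro ⟨H, hHinf, hall⟩
    obtain ⟨Z, hZS, hZsplits⟩ := hSprop H hHinf
    exact colS_unsplit hk Z H hHinf (hall (colS Z) ⟨⟨Z, hZS⟩, rfl⟩) hZsplits
  · rw [show splitNum = #S from hSeq]
    exact Cardinal.mk_range_le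

lemma par_le_split (k : ℕ) (hk : 1 ≤ k) : parNumK k ≤ splitNum := by
  obtain ⟨P, h1, h2⟩ := exists_par_witness_split k hk
  exact le_trans (csInf_le' ⟨P, h1, rfl⟩) h2

/-- part 1 of the main theorem -/
lemma parNumK_eq (k : ℕ) (hk : 2 ≤ k) : parNumK k = min boundNum splitNum := by
  apply le_antisymm
  · exact le_min (par_le_bound k hk) (par_le_split k (by omega))
  · obtain ⟨P0, h1, h2⟩ := exists_par_witness_split k (by omega)
    have hne : {κ : Cardinal | ∃ P : Set (Finset ℕ → Bool),
        (¬ ∃ H : Set ℕ, H.Infinite ∧ ∀ c ∈ P, AlmostHomogK k c H) ∧ κ = #P}.Nonempty :=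
      ⟨#P0, ⟨P0, h1, rfl⟩⟩
    apply le_csInf hne
    rintro κ ⟨P, hP, rfl⟩
    by_contra hcon
    push_neg at hcon
    have hb : #P < boundNum := lt_of_lt_of_le hcon (min_le_left _ _)
    have hs : #P < splitNum := lt_of_lt_of_le hcon (min_le_right _ _)
    obtain ⟨H, _, hHinf, hHall⟩ := lemmaA (k-1) Set.univ Set.infinite_univ P hb hs
    rw [show k - 1 + 1 = k by omega] at hHall
    exact hP ⟨H, hHinf, hHall⟩

/-! ### hom: easy directions -/

/-- first element of a finset (0 if empty) -/
noncomputable def p0 (F : Finset ℕ) : ℕ := WithTop.untopD 0 F.min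
noncomputable def p1 (F : Finset ℕ) : ℕ := WithTop.untopD 0 (F.erase (p0 F)).min
noncomputable def p2 (F : Finset ℕ) : ℕ := WithTop.untopD 0 ((F.erase (p0 F)).erase (p1 F)).min

lemma min_unbot_insert {a : ℕ} {S : Finset ℕ} (h : ∀ y ∈ S, a < y) :
    (WithTop.untopD 0 (insert a S).min) = a ∧ (insert a S).erase a = S := by
  constructor
  · have hne : (insert a S).Nonempty := ⟨a, Finset.mem_insert_self a S⟩
    have hmin : (insert a S).min' hne = a := by
      apply le_antisymm (Finset.min'_le _ a (Finset.mem_insert_self a S))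
      apply Finset.le_min'
      intro y hy
      rcases Finset.mem_insert.mp hy with rfl | hy'
      · exact le_rfl
      · exact le_of_lt (h y hy')
    rw [← Finset.coe_min' hne, hmin]
    rfl
  · exact Finset.erase_insert (fun hc => lt_irrefl a (h a hc))

open Classical in
/-- the coloring associated to a sequence of sets -/
noncomputable def colY (Y : ℕ → Set ℕ) : Finset ℕ → Bool := fun F =>
  if 3 ≤ F.card then
    (if (∀ i ≤ p0 F, (p1 F ∈ Y i ↔ p2 F ∈ Y i)) then true else false)
  else true

open Classical in
lemma colY_eval (Y : ℕ → Set ℕ) {l m n : ℕ} {T : Finset ℕ} (hlm : l < m) (hmn : m < n)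
    (hT : ∀ y ∈ T, n < y) :
    colY Y (insert l (insert m (insert n T))) =
      (if (∀ i ≤ l, (m ∈ Y i ↔ n ∈ Y i)) then true else false) := by
  classical
  set F := insert l (insert m (insert n T)) with hF
  have hsub1 : ∀ y ∈ insert m (insert n T), l < y := by
    intro y hy
    rcases Finset.mem_insert.mp hy with rfl | hy'
    · exact hlm
    rcases Finset.mem_insert.mp hy' with rfl | hy''
    · omega
    · have := hT y hy''; omega
  have hsub2 : ∀ y ∈ insert n T, m < y := by
    intro y hy
    rcases Finset.mem_insert.mp hy with rfl | hy'
    · exact hmn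
    · have := hT y hy'; omega
  have h0 := min_unbot_insert hsub1
  have hp0 : p0 F = l := h0.1
  have he0 : F.erase l = insert m (insert n T) := h0.2
  have h1 := min_unbot_insert hsub2
  have hp1 : p1 F = m := by
    rw [p1, hp0, he0]; exact h1.1
  have he1 : (F.erase l).erase m = insert n T := by rw [he0]; exact h1.2
  have h2 := min_unbot_insert hT
  have hp2 : p2 F = n := by
    rw [p2, hp0, hp1, he1]; exact h2.1
  have hcard : 3 ≤ F.card := by
    rw [hF, Finset.card_insert_of_notMem (fun hc => lt_irrefl l (hsub1 l hc)),
      Finset.card_insert_of_notMem (fun hc => lt_irrefl m (hsub2 m hc)),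
      Finset.card_insert_of_notMem (fun hc => lt_irrefl n (hT n hc))]
    omega
  unfold colY
  rw [if_pos hcard, hp0, hp1, hp2]

/-- an almost homogeneous set for colY is unsplit by every Y i -/
lemma colY_unsplit {k : ℕ} (hk : 3 ≤ k) (Y : ℕ → Set ℕ) (H : Set ℕ) (hH : H.Infinite)
    (hA : AlmostHomogK k (colY Y) H) : ∀ i, ¬ Splits (Y i) H := by
  classical
  obtain ⟨F0, hfin, hsub, i0, hhom⟩ := hA
  set H' : Set ℕ := H \ F0 with hH'
  have hH'inf : H'.Infinite := hH.diff hfin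
  -- tail sets and padding
  have tailInf : ∀ a : ℕ, ({x ∈ H' | a < x} : Set ℕ).Infinite := by
    intro a
    refine (hH'inf.diff (Set.finite_Iic a)).mono ?_
    rintro x ⟨hx1, hx2⟩
    exact ⟨hx1, by simpa using hx2⟩
  -- building a k-set from l < m < n in H'
  have hbuild : ∀ l m n : ℕ, l ∈ H' → m ∈ H' → n ∈ H' → l < m → m < n →
      colY Y (insert l (insert m (insert n
        (Finset.image (en {x ∈ H' | n < x}) (Finset.range (k-3)))))) = i0 ∧
      colY Y (insert l (insert m (insert n
        (Finset.image (en {x ∈ H' | n < x}) (Finset.range (k-3)))))) =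
        (if (∀ i ≤ l, (m ∈ Y i ↔ n ∈ Y i)) then true else false) := by
    intro l m n hl hm hn hlm hmn
    set Tn : Set ℕ := {x ∈ H' | n < x} with hTn
    have hTnInf : Tn.Infinite := tailInf n
    set T1 : Finset ℕ := Finset.image (en Tn) (Finset.range (k-3)) with hT1
    have hT : ∀ y ∈ T1, n < y := by
      intro y hy
      simp only [hT1, Finset.mem_image] at hy
      obtain ⟨idx, _, rfl⟩ := hy
      exact (en_mem hTnInf idx).2
    have heval := colY_eval Y hlm hmn hT
    set G := insert l (insert m (insert n T1)) with hG
    have hGsub : ↑G ⊆ H' := by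
      intro x hx
      simp only [hG, Finset.coe_insert, Set.mem_insert_iff] at hx
      rcases hx with rfl | hx; · exact hl
      rcases hx with rfl | hx; · exact hm
      rcases hx with rfl | hx; · exact hn
      rw [hT1, Finset.coe_image] at hx
      obtain ⟨idx, -, rfl⟩ := hx
      exact (en_mem hTnInf idx).1
    have hsub1 : ∀ y ∈ insert m (insert n T1), l < y := by
      intro y hy
      rcases Finset.mem_insert.mp hy with rfl | hy'
      · exact hlm
      rcases Finset.mem_insert.mp hy' with rfl | hy''
      · omega
      · have := hT y hy''; omega
    have hsub2 : ∀ y ∈ insert n T1, m < y := by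
      intro y hy
      rcases Finset.mem_insert.mp hy with rfl | hy'
      · exact hmn
      · have := hT y hy'; omega
    have hGcard : G.card = k := by
      rw [hG, Finset.card_insert_of_notMem (fun hc => lt_irrefl l (hsub1 l hc)),
        Finset.card_insert_of_notMem (fun hc => lt_irrefl m (hsub2 m hc)),
        Finset.card_insert_of_notMem (fun hc => lt_irrefl n (hT n hc)),
        hT1, Finset.card_image_of_injective _ (en_injective hTnInf), Finset.card_range]
      omega
    exact ⟨hhom G hGsub hGcard, heval⟩
  -- the homogeneous color is true
  have hi0 : i0 = true := by
    by_contra hcon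
    have hi0' : i0 = false := Bool.eq_false_iff.mpr hcon
    set l : ℕ := en H' 0 with hl
    have hlH : l ∈ H' := en_mem hH'inf 0
    set T0 : Set ℕ := {x ∈ H' | l < x} with hT0
    have hT0inf : T0.Infinite := tailInf l
    -- pigeonhole on patterns
    set φ : ℕ → Finset ℕ := fun x => (Finset.range (l+1)).filter (fun i => x ∈ Y i) with hφ
    obtain ⟨m, hm, n, hn, hmn, hφeq⟩ :=
      hT0inf.exists_ne_map_eq_of_mapsTo (f := φ)
        (t := ↑(Finset.range (l+1)).powerset)
        (fun x _ => by
          simp only [Finset.coe_powerset, Set.mem_preimage, Set.mem_powerset_iff,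
            Finset.coe_subset]
          exact Finset.filter_subset _ _)
        (Finset.finite_toSet _)
    have hagree : ∀ i ≤ l, (m ∈ Y i ↔ n ∈ Y i) := by
      intro i hi
      have h1 : (i ∈ φ m) ↔ (i ∈ φ n) := by rw [hφeq]
      simp only [hφ, Finset.mem_filter, Finset.mem_range] at h1
      constructor
      · intro h; exact (h1.mp ⟨by omega, h⟩).2
      · intro h; exact (h1.mpr ⟨by omega, h⟩).2
    rcases Nat.lt_or_ge m n with hlt | hge
    · obtain ⟨h1, h2⟩ := hbuild l m n hlH hm.1 hn.1 hm.2 hlt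
      rw [h1, hi0', if_pos hagree] at h2
      exact absurd h2.symm (by simp)
    · have hlt : n < m := by omega
      obtain ⟨h1, h2⟩ := hbuild l n m hlH hn.1 hm.1 hn.2 hlt
      rw [h1, hi0', if_pos (fun i hi => (hagree i hi).symm)] at h2
      exact absurd h2.symm (by simp)
  -- conclusion
  intro i
  set l : ℕ := en H' i with hl
  have hlH : l ∈ H' := en_mem hH'inf i
  have hil : i ≤ l := en_le hH'inf i
  have hkey : ∀ m n, m ∈ H' → n ∈ H' → l < m → m < n → (m ∈ Y i ↔ n ∈ Y i) := by
    intro m n hm hn hlm hmn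
    obtain ⟨h1, h2⟩ := hbuild l m n hlH hm hn hlm hmn
    rw [h1, hi0] at h2
    by_cases hcond : (∀ i' ≤ l, (m ∈ Y i' ↔ n ∈ Y i'))
    · exact hcond i hil
    · rw [if_neg hcond] at h2
      exact absurd h2 (by simp)
  set T0 : Set ℕ := {x ∈ H' | l < x} with hT0
  have hT0inf : T0.Infinite := tailInf l
  have hequiv : ∀ m ∈ T0, ∀ n ∈ T0, (m ∈ Y i ↔ n ∈ Y i) := by
    intro m hm n hn
    rcases Nat.lt_trichotomy m n with h | h | h
    · exact hkey m n hm.1 hn.1 hm.2 h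
    · rw [h]
    · exact (hkey n m hn.1 hm.1 hn.2 h).symm
  by_cases hex : ∃ m ∈ T0, m ∈ Y i
  · obtain ⟨m, hmT, hmY⟩ := hex
    apply notSplits_right
    have : H \ Y i ⊆ F0 ∪ Set.Iic l := by
      rintro x ⟨hx1, hx2⟩
      by_contra hcon
      have hxH' : x ∈ H' := ⟨hx1, fun h => hcon (Or.inl h)⟩
      have hxl : l < x := by
        by_contra h2
        exact hcon (Or.inr (by simpa using Nat.le_of_not_lt h2))
      exact hx2 ((hequiv x ⟨hxH', hxl⟩ m hmT).mpr hmY)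
    exact (hfin.union (Set.finite_Iic l)).subset this
  · push_neg at hex
    apply notSplits_left
    have : H ∩ Y i ⊆ F0 ∪ Set.Iic l := by
      rintro x ⟨hx1, hx2⟩
      by_contra hcon
      have hxH' : x ∈ H' := ⟨hx1, fun h => hcon (Or.inl h)⟩
      have hxl : l < x := by
        by_contra h2
        exact hcon (Or.inr (by simpa using Nat.le_of_not_lt h2))
      exact hex x ⟨hxH', hxl⟩ hx2
    exact (hfin.union (Set.finite_Iic l)).subset this

/-! ### nonemptiness and infinity facts for 𝔯_σ and 𝔡 -/

lemma unsplitSigma_nonempty : {c : Cardinal | ∃ 𝒳 : Set (Set ℕ), (∀ X ∈ 𝒳, X.Infinite) ∧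
    (∀ Y : ℕ → Set ℕ, ∃ X ∈ 𝒳, ∀ n : ℕ, ¬ Splits (Y n) X) ∧ c = #𝒳}.Nonempty := by
  refine ⟨#({X : Set ℕ | X.Infinite}), {X : Set ℕ | X.Infinite}, fun X hX => hX, fun Y => ?_, rfl⟩
  obtain ⟨X, _, hXinf, huns⟩ := unsplit_diag Set.univ Set.infinite_univ Y
  exact ⟨X, hXinf, huns⟩

lemma aleph0_le_domNum : ℵ₀ ≤ domNum := by
  obtain ⟨D, hDprop, hDeq⟩ := csInf_mem domNum_nonempty
  rw [domNum, hDeq]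
  by_contra hcon
  push_neg at hcon
  have hDfin : D.Finite := by
    rw [← Set.not_infinite]
    intro hinf
    exact absurd (Cardinal.infinite_iff.mp hinf.to_subtype) (not_le.mpr hcon)
  classical
  obtain ⟨g, hgD, hmaj⟩ := hDprop (fun n => 1 + hDfin.toFinset.sup (fun g => g n))
  obtain ⟨N, hN⟩ := Filter.eventually_atTop.mp hmaj
  have h1 : g N ≤ hDfin.toFinset.sup (fun g => g N) :=
    Finset.le_sup (f := fun g : ℕ → ℕ => g N) (hDfin.mem_toFinset.mpr hgD)
  have h2 : 1 + hDfin.toFinset.sup (fun g => g N) < g N := hN N le_rfl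
  revert h1 h2
  generalize hDfin.toFinset.sup (fun g => g N) = S
  intro h1 h2
  omega

lemma aleph0_le_unsplitSigmaNum : ℵ₀ ≤ unsplitSigmaNum := by
  obtain ⟨𝒳, hXinf, hXprop, hXeq⟩ := csInf_mem unsplitSigma_nonempty
  rw [unsplitSigmaNum, hXeq]
  by_contra hcon
  push_neg at hcon
  have hfin : 𝒳.Finite := by
    rw [← Set.not_infinite]
    intro hinf
    exact absurd (Cardinal.infinite_iff.mp hinf.to_subtype) (not_le.mpr hcon)
  have hne : Nonempty ↥𝒳 := by
    obtain ⟨X, hX, _⟩ := hXprop (fun _ => ∅)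
    exact ⟨⟨X, hX⟩⟩
  have hcnt : Countable ↥𝒳 := hfin.countable
  obtain ⟨σ, hσ⟩ := exists_surjective_nat ↥𝒳
  classical
  set Y : ℕ → Set ℕ := fun n => Classical.choose (exists_splits (σ n : Set ℕ)
    (hXinf _ (σ n).2)) with hY
  obtain ⟨X, hX, huns⟩ := hXprop Y
  obtain ⟨n, hn⟩ := hσ ⟨X, hX⟩
  apply huns n
  have := Classical.choose_spec (exists_splits (σ n : Set ℕ) (hXinf _ (σ n).2))
  rw [hY]
  simpa [hn] using this

/-! ### Main Lemma B: a realizing family of size ≤ max(𝔯_σ, 𝔡) -/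

lemma lemmaB : ∀ j : ℕ, ∃ ℋ : Set (Set ℕ), (∀ H ∈ ℋ, H.Infinite) ∧
    (∀ c : Finset ℕ → Bool, ∃ H ∈ ℋ, AlmostHomogK (j+1) c H) ∧
    Cardinal.mk ℋ ≤ max unsplitSigmaNum domNum := by
  intro j
  induction j with
  | zero =>
    obtain ⟨R, hRinf, hRprop, hReq⟩ := csInf_mem unsplitSigma_nonempty
    refine ⟨R, hRinf, ?_, ?_⟩
    · intro c
      set Z : Set ℕ := {n | c {n} = true} with hZ
      obtain ⟨X, hXR, huns⟩ := hRprop (fun _ => Z)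
      refine ⟨X, hXR, ?_⟩
      have hXinf : X.Infinite := hRinf X hXR
      have h := huns 0
      rw [Splits, not_and_or, Set.not_infinite, Set.not_infinite] at h
      rcases h with hfin | hfin
      · refine ⟨X ∩ Z, by rwa [Set.inter_comm] at hfin, Set.inter_subset_left, false, ?_⟩
        intro F hFsub hFcard
        obtain ⟨n, rfl⟩ := Finset.card_eq_one.mp hFcard
        have hn : n ∈ X \ (X ∩ Z) := hFsub (by simp)
        have : n ∉ Z := fun h => hn.2 ⟨hn.1, h⟩
        simpa [hZ] using this
      · refine ⟨X \ Z, hfin, Set.diff_subset, true, ?_⟩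
        intro F hFsub hFcard
        obtain ⟨n, rfl⟩ := Finset.card_eq_one.mp hFcard
        have hn : n ∈ X \ (X \ Z) := hFsub (by simp)
        have : n ∈ Z := by
          by_contra h
          exact hn.2 ⟨hn.1, h⟩
        simpa [hZ] using this
    · rw [show unsplitSigmaNum = #R from hReq] at *
      exact le_max_left _ _
  | succ j IH =>
    classical
    obtain ⟨ℋ', h'inf, h'real, h'card⟩ := IH
    obtain ⟨R, hRinf, hRprop, hReq⟩ := csInf_mem unsplitSigma_nonempty
    obtain ⟨D, hDprop, hDeq⟩ := csInf_mem domNum_nonempty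
    -- envelope
    set env : (ℕ → ℕ) → ℕ → ℕ := fun g n => n + 1 + (Finset.range (n+1)).sup g with henv
    have henvlt : ∀ g n, n < env g n := by intro g n; simp [henv]; omega
    have henvge : ∀ g n, g n ≤ env g n := by
      intro g n
      have : g n ≤ (Finset.range (n+1)).sup g := Finset.le_sup (Finset.self_mem_range_succ n)
      simp [henv]; omega
    set ℋ : Set (Set ℕ) := Set.range (fun q : ↥R × ↥D × ↥ℋ' =>
      en (Set.range (sparse (q.1 : Set ℕ) (env (q.2.1 : ℕ → ℕ)))) '' (q.2.2 : Set ℕ)) with hℋ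
    have hmemInf : ∀ (X : ↥R) (g : ↥D) (M : ↥ℋ'),
        (en (Set.range (sparse (X : Set ℕ) (env (g : ℕ → ℕ)))) '' (M : Set ℕ)).Infinite := by
      intro X g M
      have hX1inf : (Set.range (sparse (X : Set ℕ) (env (g : ℕ → ℕ)))).Infinite :=
        sparse_range_infinite (hRinf X X.2) (henvlt _)
      exact (h'inf M M.2).image (Set.injOn_of_injective (en_injective hX1inf))
    refine ⟨ℋ, ?_, ?_, ?_⟩
    · rintro _ ⟨⟨X, g, M⟩, rfl⟩
      exact hmemInf X g M
    · intro c
      -- sections and limit coloring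
      set Ysec : Finset ℕ → Set ℕ := fun s => {m | c (insert m s) = true} with hYsec
      obtain ⟨e, he⟩ := exists_surjective_nat (Finset ℕ)
      obtain ⟨X, hXR, hunsseq⟩ := hRprop (fun n => Ysec (e n))
      have hXinf : X.Infinite := hRinf X hXR
      have huns : ∀ s : Finset ℕ, ¬ Splits (Ysec s) X := by
        intro s
        obtain ⟨n, rfl⟩ := he s
        exact hunsseq n
      set t : Finset ℕ → Bool := fun s => if (X \ Ysec s).Finite then true else false with ht
      have hsettle : ∀ s : Finset ℕ, ∃ N : ℕ, ∀ m ∈ X, N ≤ m → c (insert m s) = t s := by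
        intro s
        have h := huns s
        rw [Splits, not_and_or, Set.not_infinite, Set.not_infinite] at h
        by_cases hfin : (X \ Ysec s).Finite
        · obtain ⟨N, hN⟩ := hfin.bddAbove
          refine ⟨N + 1, fun m hm hNm => ?_⟩
          have hmem : m ∈ Ysec s := by
            by_contra hx
            exact absurd (hN ⟨hm, hx⟩) (by omega)
          have : c (insert m s) = true := hmem
          simp [ht, hfin, this]
        · have hfin2 : (X ∩ Ysec s).Finite := by
            rcases h with h | h
            · rwa [Set.inter_comm] at h
            · exact absurd h hfin
          obtain ⟨N, hN⟩ := hfin2.bddAbove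
          refine ⟨N + 1, fun m hm hNm => ?_⟩
          have hmem : m ∉ Ysec s := by
            intro hx
            exact absurd (hN ⟨hm, hx⟩) (by omega)
          have : c (insert m s) = false := by
            have : ¬ (c (insert m s) = true) := hmem
            simpa using this
          simp [ht, hfin, this]
      choose Nf hNf using hsettle
      set fC : ℕ → ℕ := fun n => ((Finset.range (n+1)).powerset).sup Nf with hfC
      have hfCprop : ∀ n : ℕ, ∀ s ⊆ Finset.range (n+1), ∀ m ∈ X,
          fC n ≤ m → c (insert m s) = t s := by
        intro n s hs m hm hle
        refine hNf s m hm ?_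
        exact le_trans (Finset.le_sup (Finset.mem_powerset.mpr hs)) hle
      obtain ⟨g, hgD, hgmaj⟩ := hDprop fC
      -- the sparse set
      set X1 : Set ℕ := Set.range (sparse X (env g)) with hX1
      have hX1inf : X1.Infinite := sparse_range_infinite hXinf (henvlt g)
      have hX1sub : X1 ⊆ X := sparse_range_subset hXinf _
      -- pull back the limit coloring
      set c' : Finset ℕ → Bool := fun s => t (Finset.image (en X1) s) with hc'
      obtain ⟨M, hM, F0, hF0fin, hF0sub, i, hhom⟩ := h'real c'
      have hMinf : M.Infinite := h'inf M hM
      set H : Set ℕ := en X1 '' M with hHdef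
      have hHmem : H ∈ ℋ := ⟨(⟨X, hXR⟩, ⟨g, hgD⟩, ⟨M, hM⟩), rfl⟩
      refine ⟨H, hHmem, ?_⟩
      obtain ⟨N1, hN1⟩ := Filter.eventually_atTop.mp hgmaj
      refine ⟨(en X1 '' F0) ∪ {x ∈ H | x ≤ N1}, ?_, ?_, i, ?_⟩
      · exact (hF0fin.image _).union ((Set.finite_Iic N1).subset (fun x hx => hx.2))
      · exact Set.union_subset (Set.image_mono hF0sub) (fun x hx => hx.1)
      · intro G hGsub hGcard
        have hGne : G.Nonempty := Finset.card_pos.mp (by omega)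
        set b := G.max' hGne with hb
        set s := G.erase b with hsdef
        have hbG : b ∈ G := G.max'_mem hGne
        have hins : insert b s = G := Finset.insert_erase hbG
        have hscard : s.card = j + 1 := by
          rw [hsdef, Finset.card_erase_of_mem hbG, hGcard]
          omega
        have hsne : s.Nonempty := Finset.card_pos.mp (by omega)
        set a := s.max' hsne with ha
        have haS : a ∈ s := s.max'_mem hsne
        have haG : a ∈ G := Finset.erase_subset _ _ haS
        have hab : a < b := by
          have h1 : a ≤ b := Finset.le_max' G a haG
          have h2 : a ≠ b := (Finset.mem_erase.mp haS).1
          omega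
        have hsrange : s ⊆ Finset.range (a + 1) := by
          intro x hx
          rw [Finset.mem_range]
          exact Nat.lt_succ_of_le (Finset.le_max' s x hx)
        have haHF : a ∈ H \ ((en X1 '' F0) ∪ {x ∈ H | x ≤ N1}) := hGsub haG
        have hbHF : b ∈ H \ ((en X1 '' F0) ∪ {x ∈ H | x ≤ N1}) := hGsub hbG
        have haN1 : N1 < a := by
          by_contra hcon
          exact haHF.2 (Or.inr ⟨haHF.1, by omega⟩)
        have hHsubX1 : H ⊆ X1 := by
          rintro _ ⟨x, _, rfl⟩
          exact en_mem hX1inf x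
        have haX1 : a ∈ X1 := hHsubX1 haHF.1
        have hbX1 : b ∈ X1 := hHsubX1 hbHF.1
        have hgab : env g a < b := sparse_key hXinf (henvlt g) haX1 hbX1 hab
        have hfCa : fC a < g a := hN1 a (by omega)
        have hgea := henvge g a
        have hcG : c G = t s := by
          rw [← hins]
          exact hfCprop a s hsrange b (hX1sub hbX1) (by omega)
        -- s comes from M
        have hssub : ↑s ⊆ en X1 '' M := by
          intro x hx
          have hxG : x ∈ G := (Finset.erase_subset _ _) hx
          exact (hGsub hxG).1
        obtain ⟨s', hs'sub, hs'img⟩ := Finset.subset_set_image_iff.mp hssub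
        have hs'card : s'.card = j + 1 := by
          rw [← hscard, ← hs'img]
          exact (Finset.card_image_of_injOn
            (Set.injOn_of_injective (en_injective hX1inf))).symm
        have hs'sub2 : ↑s' ⊆ M \ F0 := by
          intro x hx
          refine ⟨hs'sub hx, fun hxF0 => ?_⟩
          have h1 : en X1 x ∈ s := by
            rw [← hs'img]
            exact Finset.mem_image_of_mem _ hx
          have h2 : en X1 x ∈ H \ ((en X1 '' F0) ∪ {x ∈ H | x ≤ N1}) := by
            apply hGsub
            exact (Finset.erase_subset _ _) h1
          exact h2.2 (Or.inl ⟨x, hxF0, rfl⟩)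
        have hc's' : c' s' = i := hhom s' hs'sub2 hs'card
        have : t s = i := by
          rw [← hc's', hc', ← hs'img]
        rw [hcG, this]
    · -- cardinality
      have h1 : #ℋ ≤ #(↥R × ↥D × ↥ℋ') := Cardinal.mk_range_le
      have h2 : #(↥R × ↥D × ↥ℋ') = #R * (#D * #ℋ') := by
        rw [Cardinal.mk_prod, Cardinal.lift_id, Cardinal.lift_id,
          Cardinal.mk_prod, Cardinal.lift_id, Cardinal.lift_id]
      set μ := max unsplitSigmaNum domNum with hμ
      have hR : #R ≤ μ := by
        rw [← hReq]; exact le_max_left _ _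
      have hD : #D ≤ μ := by
        rw [← hDeq]; exact le_max_right _ _
      have hℵ : ℵ₀ ≤ μ := le_trans aleph0_le_domNum (le_max_right _ _)
      have h3 : #D * #ℋ' ≤ μ :=
        le_trans (Cardinal.mul_le_max _ _) (by
          apply max_le (max_le hD h'card) hℵ)
      have h4 : #R * (#D * #ℋ') ≤ μ :=
        le_trans (Cardinal.mul_le_max _ _) (by
          apply max_le (max_le hR h3) hℵ)
      rw [h2] at h1
      exact le_trans h1 h4

/-! ### assembling the hom side -/

lemma homNumK_eq (k : ℕ) (hk : 3 ≤ k) : homNumK k = max unsplitSigmaNum domNum := by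
  obtain ⟨ℋB, hBinf, hBreal, hBcard⟩ := lemmaB (k-1)
  have hBreal' : ∀ c : Finset ℕ → Bool, ∃ H ∈ ℋB, AlmostHomogK k c H := by
    intro c
    obtain ⟨H, hH, hA⟩ := hBreal c
    rw [show k - 1 + 1 = k by omega] at hA
    exact ⟨H, hH, hA⟩
  apply le_antisymm
  · exact le_trans (csInf_le' ⟨ℋB, hBinf, hBreal', rfl⟩) hBcard
  · -- lower bound
    have hne : {κ : Cardinal | ∃ ℋ : Set (Set ℕ), (∀ H ∈ ℋ, H.Infinite) ∧
        (∀ c : Finset ℕ → Bool, ∃ H ∈ ℋ, AlmostHomogK k c H) ∧ κ = #ℋ}.Nonempty :=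
      ⟨#ℋB, ⟨ℋB, hBinf, hBreal', rfl⟩⟩
    obtain ⟨ℋ0, h0inf, h0real, h0eq⟩ := csInf_mem hne
    rw [homNumK, h0eq]
    apply max_le
    · -- 𝔯_σ ≤ #ℋ0
      apply csInf_le'
      refine ⟨ℋ0, h0inf, fun Y => ?_, rfl⟩
      obtain ⟨H, hH, hA⟩ := h0real (colY Y)
      exact ⟨H, hH, colY_unsplit hk Y H (h0inf H hH) hA⟩
    · -- 𝔡 ≤ #ℋ0
      have hdom : domNum ≤ #(Set.range (fun H : ↥ℋ0 => fun n => en (H : Set ℕ) (n + k) + 1)) := by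
        apply csInf_le'
        refine ⟨_, fun f => ?_, rfl⟩
        obtain ⟨H, hH, hA⟩ := h0real (colF f)
        exact ⟨_, ⟨⟨H, hH⟩, rfl⟩, colF_evmaj (by omega) f H (h0inf H hH) hA⟩
      exact le_trans hdom Cardinal.mk_range_le

theorem parNumK_homNumK_eq (k : ℕ) (hk : 3 ≤ k) :
    parNumK k = min boundNum splitNum ∧ homNumK k = max unsplitSigmaNum domNum :=
  ⟨parNumK_eq k (by omega), homNumK_eq k hk⟩
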